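/- arXiv:1507.01281 — 3 statements merged into one kernel-verified Lean document; each statement's English description precedes it below -/
import Mathlib

section
/- A finite partially ordered set x is covariant (i.e., admits a unique natural labeling up to isomorphism) if and only if any two elements a, b of x with different heights are comparable, where the height h(a) is the length (number of elements minus one) of a longest chain in x ending at a. -/
variable {α : Type*} [PartialOrder α] [Fintype α]

/-- A labeling of a finite poset `α`: an order-preserving bijection onto `{1,…,|α|}`
(realized as `Fin (Fintype.card α)`). -/
def IsNaturalLabeling (ℓ : α ≃ Fin (Fintype.card α)) : Prop :=
  ∀ a b : α, a < b → ℓ a < ℓ b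

/-- A finite poset is covariant if any two of its labelings are isomorphic: there is an
order automorphism carrying one labeling to the other. -/
def IsCovariant (α : Type*) [PartialOrder α] [Fintype α] : Prop :=
  ∀ ℓ ℓ' : α ≃ Fin (Fintype.card α), IsNaturalLabeling ℓ → IsNaturalLabeling ℓ' →
    ∃ φ : α ≃o α, ∀ a : α, ℓ' (φ a) = ℓ a

/-!
If `a` and `b` are incomparable, some labeling gives them consecutive labels, and exchanging
these two labels gives another labeling; an automorphism carrying one to the other sends `a`
to `b`, so `a` and `b` have the same height. Conversely, if elements of different heights are
comparable, then `x < y ↔ height x < height y`, so every labeling lists the elements by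
non-decreasing height. Two labelings therefore put elements of the same height at each
position, and the bijection matching equal labels preserves height, hence the order.
-/

open Order

theorem Equiv.swap_lt_swap_of_covBy {β : Type*} [LinearOrder β] [DecidableEq β] {i j x y : β}
    (hij : i ⋖ j) (hxy : x < y) (hne : ¬(x = i ∧ y = j)) : swap i j x < swap i j y := by
  have hle : ∀ z, i < z → j ≤ z := fun _ => hij.ge_of_gt
  have hge : ∀ z, z < j → z ≤ i := fun _ => hij.le_of_lt
  have hlt := hij.lt
  rw [swap_apply_def, swap_apply_def]
  split_ifs <;> grind

theorem IsNaturalLabeling.trans_swap {ℓ : α ≃ Fin (Fintype.card α)}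
    (hℓ : IsNaturalLabeling ℓ) {a b : α} (hab : ¬a < b) (hcov : ℓ a ⋖ ℓ b) :
    IsNaturalLabeling (ℓ.trans (Equiv.swap (ℓ a) (ℓ b))) := by
  intro x y hxy
  refine Equiv.swap_lt_swap_of_covBy hcov (hℓ x y hxy) ?_
  rintro ⟨hx, hy⟩
  rw [ℓ.injective hx, ℓ.injective hy] at hxy
  exact hab hxy

theorem exists_isNaturalLabeling_lt_iff {β : Type*} [LinearOrder β] {g : α → β}
    (hg : StrictMono g) (hinj : Function.Injective g) :
    ∃ ℓ : α ≃ Fin (Fintype.card α),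
      IsNaturalLabeling ℓ ∧ ∀ x y, ℓ x < ℓ y ↔ g x < g y := by
  let e : Fin (Fintype.card α) ≃o Set.range g :=
    Fintype.orderIsoFinOfCardEq _ (Set.card_range_of_injective hinj)
  let ℓ := (Equiv.ofInjective g hinj).trans e.symm.toEquiv
  have hℓ : ∀ x y, ℓ x < ℓ y ↔ g x < g y := fun x y => e.symm.lt_iff_lt
  exact ⟨ℓ, fun x y hxy => (hℓ x y).2 (hg hxy), hℓ⟩

theorem exists_isNaturalLabeling_covBy {a b : α} (hab : ¬a ≤ b) (hba : ¬b ≤ a) :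
    ∃ ℓ : α ≃ Fin (Fintype.card α), IsNaturalLabeling ℓ ∧ ℓ a ⋖ ℓ b := by
  classical
  let r : α → ℕ := fun x =>
    if x < a ∨ x < b then 0 else if x = a then 1 else if x = b then 2 else 3
  have hab' : ¬a < b := fun h => hab h.le
  have hba' : ¬b < a := fun h => hba h.le
  have hra : r a = 1 := by simp [r, hab']
  have hrb : r b = 2 := by simp [r, hba', ne_of_not_le hba]
  have hr1 : ∀ z, r z = 1 → z = a := by intro z; simp only [r]; split_ifs <;> simp_all
  have hr2 : ∀ z, r z = 2 → z = b := by intro z; simp only [r]; split_ifs <;> simp_all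
  have hr : ∀ x y, x < y → r x ≤ r y := by
    intro x y hxy
    simp only [r]
    split_ifs <;> first | omega | grind [lt_trans]
  have hext : StrictMono (toLinearExtension : α → LinearExtension α) :=
    toLinearExtension.monotone.strictMono_of_injective fun _ _ h => h
  let g : α → ℕ ×ₗ LinearExtension α := fun x => toLex (r x, toLinearExtension x)
  have hg : StrictMono g := fun x y hxy =>
    Prod.Lex.toLex_lt_toLex'.2 ⟨hr x y hxy, fun _ => hext hxy⟩
  have hinj : Function.Injective g := fun x y h => congrArg (fun p => (ofLex p).2) h
  obtain ⟨ℓ, hℓ, hℓg⟩ := exists_isNaturalLabeling_lt_iff hg hinj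
  refine ⟨ℓ, hℓ, (hℓg a b).2 ?_, fun c hac hcb => ?_⟩
  · exact Prod.Lex.toLex_lt_toLex.2 (Or.inl (by simp [hra, hrb]))
  · rw [← ℓ.apply_symm_apply c, hℓg] at hac hcb
    have h1 : r a ≤ r (ℓ.symm c) := (Prod.Lex.toLex_lt_toLex'.1 hac).1
    have h2 : r (ℓ.symm c) ≤ r b := (Prod.Lex.toLex_lt_toLex'.1 hcb).1
    obtain h | h : r (ℓ.symm c) = 1 ∨ r (ℓ.symm c) = 2 := by omega
    · rw [hr1 _ h] at hac; exact lt_irrefl _ hac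
    · rw [hr2 _ h] at hcb; exact lt_irrefl _ hcb

theorem IsCovariant.exists_orderIso_apply_eq (hα : IsCovariant α) {a b : α} (hab : ¬a ≤ b)
    (hba : ¬b ≤ a) : ∃ φ : α ≃o α, φ a = b := by
  obtain ⟨ℓ, hℓ, hcov⟩ := exists_isNaturalLabeling_covBy hab hba
  obtain ⟨φ, hφ⟩ := hα ℓ _ hℓ (hℓ.trans_swap (fun h => hab h.le) hcov)
  refine ⟨φ, (ℓ.trans (Equiv.swap (ℓ a) (ℓ b))).injective ?_⟩
  simp only [hφ, Equiv.trans_apply, Equiv.swap_apply_right]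

theorem height_lt_top_of_fintype (x : α) : height x < ⊤ :=
  (height_le fun p _ => by exact_mod_cast p.length_lt_card.le).trans_lt (ENat.natCast_lt_top _)

theorem lt_iff_height_lt_of_comparable
    (H : ∀ a b : α, height a ≠ height b → a < b ∨ b < a) (a b : α) :
    a < b ↔ height a < height b := by
  refine ⟨fun h => height_strictMono h (height_lt_top_of_fintype a), fun h => ?_⟩
  refine (H a b h.ne).resolve_right fun hba => ?_
  exact lt_asymm h (height_strictMono hba (height_lt_top_of_fintype b))

theorem IsNaturalLabeling.monotone_height_symm (hlt : ∀ a b : α, a < b ↔ height a < height b)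
    {ℓ : α ≃ Fin (Fintype.card α)} (hℓ : IsNaturalLabeling ℓ) :
    Monotone fun i => height (ℓ.symm i) := by
  intro i j hij
  by_contra! h
  have hji := hℓ _ _ ((hlt _ _).2 h)
  rw [ℓ.apply_symm_apply, ℓ.apply_symm_apply] at hji
  exact (hij.trans_lt hji).false

theorem isCovariant_of_lt_iff_height_lt (hlt : ∀ a b : α, a < b ↔ height a < height b) :
    IsCovariant α := by
  intro ℓ ℓ' hℓ hℓ'
  have heq : (fun i => height (ℓ.symm i)) = fun i => height (ℓ'.symm i) := by
    simpa [Function.comp_def] using Tuple.unique_monotone (f := fun i => height (ℓ.symm i))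
      (σ := 1) (τ := ℓ'.symm.trans ℓ) (hℓ.monotone_height_symm hlt) (by
        simpa [Function.comp_def] using hℓ'.monotone_height_symm hlt)
  have hheight : ∀ x, height (ℓ'.symm (ℓ x)) = height x := fun x => by
    simpa using (congrFun heq (ℓ x)).symm
  refine ⟨OrderIso.ofRelIsoLT ⟨ℓ.trans ℓ'.symm, fun {x y} => ?_⟩, fun x => ?_⟩
  · simp [hlt, hheight]
  · simp

/-- A finite poset is covariant (its natural labeling is unique up to isomorphism) iff any
two elements of different heights are comparable, the height of `a` being the length of a
longest chain ending at `a`. -/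
theorem stmt_0 :
    IsCovariant α ↔
      ∀ a b : α, Order.height a ≠ Order.height b → a < b ∨ b < a := by
  refine ⟨fun hα a b hne => ?_,
    fun H => isCovariant_of_lt_iff_height_lt (lt_iff_height_lt_of_comparable H)⟩
  by_contra hcomp
  have hne' : a ≠ b := fun h => hne (h ▸ rfl)
  have hab : ¬a ≤ b := fun h => hcomp (.inl (h.lt_of_ne hne'))
  have hba : ¬b ≤ a := fun h => hcomp (.inr (h.lt_of_ne hne'.symm))
  obtain ⟨φ, rfl⟩ := hα.exists_orderIso_apply_eq hab hba
  exact hne (height_orderIso φ a).symm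
end

section
/- Every c-causet has exactly four distinct offspring under the production relation, with shell sequences (s_0,...,s_n+2), (s_0,...,s_n+1,1), (s_0,...,s_n,2), and (s_0,...,s_n,1,1), where (s_0,...,s_n) is the shell sequence of the parent. -/
/-- Adjoining a maximal element to a c-causet (identified with its shell sequence)
either enlarges the last shell by one or starts a new shell of size one. -/
def StepShell (s t : List ℕ) : Prop :=
  (∃ h : s ≠ [], t = s.dropLast ++ [s.getLast h + 1]) ∨ t = s ++ [1]

/-- `x` produces `y` if `y` is obtained from `x` by adjoining two maximal elements in
succession. -/
def Produces (s y : List ℕ) : Prop :=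
  ∃ t : List ℕ, StepShell s t ∧ StepShell t y

theorem stepShell_append_singleton_iff {l t : List ℕ} {a : ℕ} :
    StepShell (l ++ [a]) t ↔ t = l ++ [a + 1] ∨ t = l ++ [a, 1] := by
  simp [StepShell]

theorem produces_append_singleton_iff {l y : List ℕ} {a : ℕ} :
    Produces (l ++ [a]) y ↔
      y = l ++ [a + 2] ∨ y = l ++ [a + 1, 1] ∨ y = l ++ [a, 2] ∨ y = l ++ [a, 1, 1] := by
  simp only [Produces, stepShell_append_singleton_iff, or_and_right, exists_or, exists_eq_left]
  rw [show l ++ [a, 1] = l ++ [a] ++ [1] by simp, stepShell_append_singleton_iff]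
  simp [or_assoc]

theorem card_offspring (l : List ℕ) (a : ℕ) :
    ({l ++ [a + 2], l ++ [a + 1, 1], l ++ [a, 2], l ++ [a, 1, 1]} : Finset (List ℕ)).card = 4 := by
  simp [Finset.card_insert_of_notMem]

/-- Every c-causet with shell sequence `(s₀,…,sₙ)` has exactly four distinct offspring,
with shell sequences `(s₀,…,sₙ+2)`, `(s₀,…,sₙ+1,1)`, `(s₀,…,sₙ,2)` and `(s₀,…,sₙ,1,1)`. -/
theorem stmt_5 (s : List ℕ) (hs : s ≠ []) :
    {y : List ℕ | Produces s y} =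
      {s.dropLast ++ [s.getLast hs + 2],
       s.dropLast ++ [s.getLast hs + 1, 1],
       s ++ [2],
       s ++ [1, 1]} ∧
    ({s.dropLast ++ [s.getLast hs + 2],
      s.dropLast ++ [s.getLast hs + 1, 1],
      s ++ [2],
      s ++ [1, 1]} : Finset (List ℕ)).card = 4 := by
  obtain ⟨l, a, rfl⟩ : ∃ l a, s = l ++ [a] :=
    ⟨s.dropLast, s.getLast hs, (List.dropLast_append_getLast hs).symm⟩
  simp only [List.dropLast_concat, List.getLast_concat, List.append_assoc, List.singleton_append]
  exact ⟨Set.ext fun _ => produces_append_singleton_iff, card_offspring l a⟩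
end

section
/- With a = √(j^0), b = √(j^1), c = √(j^2), d = √(j^3) satisfying a^2 = b^2 + c^2 + d^2, the vector u_1 = ((√2 − 1)a, 0, i d, i b − c) satisfies M u_1 = −√2·a·u_1, and the vector u_3 = (i b + c, −i d, 0, (√2 − 1)a) satisfies M u_3 = √2·a·u_3, where M = [[a, 0, i d, i b + c], [0, a, i b − c, −i d], [−i d, −i b − c, −a, 0], [−i b + c, i d, 0, −a]]. -/
/-- For nonnegative reals `a,b,c,d` with `a² = b² + c² + d²`, the vector
`u₁ = ((√2-1)a, 0, id, ib-c)` is an eigenvector of the Dirac matrix `M` with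
eigenvalue `-√2·a`, and `u₃ = (ib+c, -id, 0, (√2-1)a)` is an eigenvector with
eigenvalue `√2·a`. -/
theorem stmt_17 (a b c d : ℝ)
    (ha : 0 ≤ a) (hb : 0 ≤ b) (hc : 0 ≤ c) (hd : 0 ≤ d)
    (hnull : a ^ 2 = b ^ 2 + c ^ 2 + d ^ 2) :
    let M : Matrix (Fin 4) (Fin 4) ℂ :=
      !![(a : ℂ), 0, Complex.I * d, Complex.I * b + c;
         0, (a : ℂ), Complex.I * b - c, -Complex.I * d;
         -Complex.I * d, -Complex.I * b - c, -(a : ℂ), 0;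
         -Complex.I * b + c, Complex.I * d, 0, -(a : ℂ)]
    let u1 : Fin 4 → ℂ :=
      ![((Real.sqrt 2 - 1 : ℝ) : ℂ) * a, 0, Complex.I * d, Complex.I * b - c]
    let u3 : Fin 4 → ℂ :=
      ![Complex.I * b + c, -Complex.I * d, 0, ((Real.sqrt 2 - 1 : ℝ) : ℂ) * a]
    M.mulVec u1 = (-(Real.sqrt 2 : ℂ) * a) • u1 ∧
    M.mulVec u3 = ((Real.sqrt 2 : ℂ) * a) • u3 := by
  intro M u1 u3
  have h2 : ((Real.sqrt 2 : ℝ) : ℂ) * ((Real.sqrt 2 : ℝ) : ℂ) = 2 := by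
    norm_cast
    exact Real.mul_self_sqrt (by norm_num)
  have hn : ((a:ℂ)) ^ 2 = (b:ℂ) ^ 2 + (c:ℂ) ^ 2 + (d:ℂ) ^ 2 := by
    exact_mod_cast congrArg (fun x : ℝ => (x : ℂ)) hnull
  have hI : (Complex.I) ^ 2 = -1 := Complex.I_sq
  constructor <;>
  · funext i
    fin_cases i <;>
      simp [M, u1, u3, Matrix.mulVec, dotProduct, Fin.sum_univ_four,
        Complex.ofReal_sub, Complex.ofReal_one] <;>
      ring_nf <;>
      first
        | rfl
        | (rw [hI]
           first
             | linear_combination (-1 + ((Real.sqrt 2:ℝ):ℂ)) * hn + (a:ℂ)^2 * (by linear_combination h2 : ((Real.sqrt 2:ℝ):ℂ)^2 = 2)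
             | linear_combination (1 - ((Real.sqrt 2:ℝ):ℂ)) * hn - (a:ℂ)^2 * (by linear_combination h2 : ((Real.sqrt 2:ℝ):ℂ)^2 = 2)
             | linear_combination hn + (a:ℂ)^2 * (by linear_combination h2 : ((Real.sqrt 2:ℝ):ℂ)^2 = 2)
             | linear_combination -hn - (a:ℂ)^2 * (by linear_combination h2 : ((Real.sqrt 2:ℝ):ℂ)^2 = 2)
             | linear_combination hn
             | linear_combination -hn
             | ring)
end
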